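/- Under the self-censoring assumption, if the itemwise propensity score π_i(x, y_i) = p(R_i = 1 | x, y_i, R_{-i} = 1) is known, then the conditional moment restriction E{1(R = 1)/π_i(X, Y_i) − 1(R_{-i} = 1) | X, Y_{-i}} = 0 holds almost surely. -/
import Mathlib


open Finset
open scoped Classical

noncomputable def pr {Ω : Type*} [Fintype Ω] (μ : Ω → ℝ) (A : Ω → Prop) : ℝ :=
  ∑ ω, if A ω then μ ω else 0

noncomputable def cpr {Ω : Type*} [Fintype Ω] (μ : Ω → ℝ) (A B : Ω → Prop) : ℝ :=
  pr μ (fun ω => A ω ∧ B ω) / pr μ B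

/-- Conditional expectation `E{h | B}` in a finite probability space. -/
noncomputable def cexp {Ω : Type*} [Fintype Ω] (μ : Ω → ℝ) (h : Ω → ℝ) (B : Ω → Prop) : ℝ :=
  (∑ ω, if B ω then μ ω * h ω else 0) / pr μ B

/-- The itemwise propensity score `π_i(x, y_i) = p(R_i = 1 | x, y_i, R_{-i} = 1)`. -/
noncomputable def piFn {Ω 𝒳 𝒴 : Type*} [Fintype Ω] {p : ℕ} (μ : Ω → ℝ)
    (X : Ω → 𝒳) (Y : Ω → Fin p → 𝒴) (R : Ω → Fin p → Bool)
    (i : Fin p) (x : 𝒳) (yi : 𝒴) : ℝ :=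
  cpr μ (fun ω => R ω i = true)
    (fun ω => X ω = x ∧ Y ω i = yi ∧ ∀ j, j ≠ i → R ω j = true)

lemma pr_nonneg' {Ω : Type*} [Fintype Ω] (μ : Ω → ℝ) (hμ0 : ∀ ω, 0 ≤ μ ω) (A : Ω → Prop) :
    0 ≤ pr μ A :=
  Finset.sum_nonneg fun ω _ => by by_cases h : A ω <;> simp [h, hμ0 ω]

lemma pr_le' {Ω : Type*} [Fintype Ω] (μ : Ω → ℝ) (hμ0 : ∀ ω, 0 ≤ μ ω) (A B : Ω → Prop)
    (h : ∀ ω, A ω → B ω) : pr μ A ≤ pr μ B := by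
  refine Finset.sum_le_sum fun ω _ => ?_
  by_cases hA : A ω
  · simp [hA, h ω hA]
  · by_cases hB : B ω <;> simp [hA, hB, hμ0 ω]

lemma pr_zero' {Ω : Type*} [Fintype Ω] (μ : Ω → ℝ) (hμ0 : ∀ ω, 0 ≤ μ ω) (A B : Ω → Prop)
    (h : ∀ ω, A ω → B ω) (hB : pr μ B = 0) : pr μ A = 0 :=
  le_antisymm (hB ▸ pr_le' μ hμ0 A B h) (pr_nonneg' μ hμ0 A)

lemma pr_congr' {Ω : Type*} [Fintype Ω] (μ : Ω → ℝ) (A B : Ω → Prop)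
    (h : ∀ ω, A ω ↔ B ω) : pr μ A = pr μ B :=
  Finset.sum_congr rfl fun ω _ => if_congr (h ω) rfl rfl

lemma key' {Ω 𝒳 𝒴 : Type*} [Fintype Ω] {p : ℕ}
    (μ : Ω → ℝ) (hμ0 : ∀ ω, 0 ≤ μ ω)
    (X : Ω → 𝒳) (Y : Ω → Fin p → 𝒴) (R : Ω → Fin p → Bool)
    (selfcensor : ∀ (i : Fin p) (a : Bool) (x : 𝒳) (yi : 𝒴) (yv : Fin p → 𝒴)
        (rv : Fin p → Bool),
      pr μ (fun ω => X ω = x ∧ Y ω i = yi ∧ ∀ j, j ≠ i → R ω j = rv j) > 0 →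
      cpr μ (fun ω => R ω i = a ∧ ∀ j, j ≠ i → Y ω j = yv j)
          (fun ω => X ω = x ∧ Y ω i = yi ∧ ∀ j, j ≠ i → R ω j = rv j)
        = cpr μ (fun ω => R ω i = a)
            (fun ω => X ω = x ∧ Y ω i = yi ∧ ∀ j, j ≠ i → R ω j = rv j)
          * cpr μ (fun ω => ∀ j, j ≠ i → Y ω j = yv j)
            (fun ω => X ω = x ∧ Y ω i = yi ∧ ∀ j, j ≠ i → R ω j = rv j))
    (hpos : ∀ (r' : Fin p → Bool) (x : 𝒳) (y : Fin p → 𝒴),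
      pr μ (fun ω => X ω = x ∧ ∀ j, Y ω j = y j) > 0 →
      cpr μ (fun ω => ∀ j, R ω j = r' j) (fun ω => X ω = x ∧ ∀ j, Y ω j = y j) > 0)
    (i : Fin p) (x : 𝒳) (yi : 𝒴) (yv : Fin p → 𝒴) :
    pr μ (fun ω => X ω = x ∧ Y ω i = yi ∧ (∀ j, j ≠ i → Y ω j = yv j) ∧ ∀ j, R ω j = true)
      / piFn μ X Y R i x yi
    = pr μ (fun ω => X ω = x ∧ Y ω i = yi ∧ (∀ j, j ≠ i → Y ω j = yv j) ∧
        ∀ j, j ≠ i → R ω j = true) := by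
  set A1 : Ω → Prop := fun ω => X ω = x ∧ Y ω i = yi ∧ (∀ j, j ≠ i → Y ω j = yv j) ∧
    ∀ j, R ω j = true with hA1def
  set A2 : Ω → Prop := fun ω => X ω = x ∧ Y ω i = yi ∧ (∀ j, j ≠ i → Y ω j = yv j) ∧
    ∀ j, j ≠ i → R ω j = true with hA2def
  set C : Ω → Prop := fun ω => X ω = x ∧ Y ω i = yi ∧ ∀ j, j ≠ i → R ω j = true with hCdef
  set π : ℝ := piFn μ X Y R i x yi with hπdef
  rcases (pr_nonneg' μ hμ0 C).lt_or_eq with hC | hC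
  · -- pr C > 0
    have hCne : pr μ C ≠ 0 := ne_of_gt hC
    have hsc : pr μ (fun ω => (R ω i = true ∧ ∀ j, j ≠ i → Y ω j = yv j) ∧ C ω) / pr μ C
        = π * (pr μ (fun ω => (∀ j, j ≠ i → Y ω j = yv j) ∧ C ω) / pr μ C) :=
      selfcensor i true x yi yv (fun _ => true) hC
    have e1 : pr μ (fun ω => (R ω i = true ∧ ∀ j, j ≠ i → Y ω j = yv j) ∧ C ω) = pr μ A1 := by
      refine pr_congr' μ _ _ fun ω => ?_
      constructor
      · rintro ⟨⟨hri, hy⟩, hx, hyi, hr⟩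
        exact ⟨hx, hyi, hy, fun j => if hj : j = i then hj ▸ hri else hr j hj⟩
      · rintro ⟨hx, hyi, hy, hr⟩
        exact ⟨⟨hr i, hy⟩, hx, hyi, fun j _ => hr j⟩
    have e2 : pr μ (fun ω => (∀ j, j ≠ i → Y ω j = yv j) ∧ C ω) = pr μ A2 := by
      refine pr_congr' μ _ _ fun ω => ?_
      constructor
      · rintro ⟨hy, hx, hyi, hr⟩; exact ⟨hx, hyi, hy, hr⟩
      · rintro ⟨hx, hyi, hy, hr⟩; exact ⟨hy, hx, hyi, hr⟩
    rw [e1, e2] at hsc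
    have key1 : pr μ A1 = π * pr μ A2 := by
      calc pr μ A1 = (pr μ A1 / pr μ C) * pr μ C := (div_mul_cancel₀ _ hCne).symm
        _ = (π * (pr μ A2 / pr μ C)) * pr μ C := by rw [hsc]
        _ = π * pr μ A2 := by rw [mul_assoc, div_mul_cancel₀ _ hCne]
    by_cases hπ0 : π = 0
    · have hA1 : pr μ A1 = 0 := by rw [key1, hπ0, zero_mul]
      have hA2 : pr μ A2 = 0 := by
        by_contra hne
        have hA2pos : 0 < pr μ A2 := (pr_nonneg' μ hμ0 A2).lt_of_ne (Ne.symm hne)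
        set y : Fin p → 𝒴 := fun j => if j = i then yi else yv j with hydef
        have hD : 0 < pr μ (fun ω => X ω = x ∧ ∀ j, Y ω j = y j) := by
          refine lt_of_lt_of_le hA2pos (pr_le' μ hμ0 _ _ ?_)
          rintro ω ⟨hx, hyi, hy, _⟩
          refine ⟨hx, fun j => ?_⟩
          by_cases hj : j = i
          · subst hj; simp [hydef, hyi]
          · simp [hydef, hj, hy j hj]
        have hcpr := hpos (fun _ => true) x y hD
        have hDne : pr μ (fun ω => X ω = x ∧ ∀ j, Y ω j = y j) ≠ 0 := ne_of_gt hD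
        have hnum : 0 < pr μ (fun ω => (∀ j, R ω j = true) ∧ (X ω = x ∧ ∀ j, Y ω j = y j)) := by
          by_contra hle
          push_neg at hle
          have hz : pr μ (fun ω => (∀ j, R ω j = true) ∧ (X ω = x ∧ ∀ j, Y ω j = y j)) = 0 :=
            le_antisymm hle (pr_nonneg' μ hμ0 _)
          have : cpr μ (fun ω => ∀ j, R ω j = (fun _ => true) j)
              (fun ω => X ω = x ∧ ∀ j, Y ω j = y j) = 0 := by
            show pr μ _ / pr μ _ = 0
            rw [show pr μ (fun ω => (∀ j, R ω j = (fun _ : Fin p => true) j) ∧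
              (X ω = x ∧ ∀ j, Y ω j = y j)) = 0 from hz, zero_div]
          rw [this] at hcpr
          exact lt_irrefl 0 hcpr
        have hle1 : pr μ (fun ω => (∀ j, R ω j = true) ∧ (X ω = x ∧ ∀ j, Y ω j = y j))
            ≤ pr μ A1 := by
          refine pr_le' μ hμ0 _ _ ?_
          rintro ω ⟨hr, hx, hy⟩
          refine ⟨hx, ?_, fun j hj => ?_, hr⟩
          · have := hy i; simpa [hydef] using this
          · have := hy j; simpa [hydef, hj] using this
        rw [hA1] at hle1
        exact absurd (lt_of_lt_of_le hnum hle1) (lt_irrefl 0)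
      rw [hA1, hA2, zero_div]
    · rw [key1, mul_comm, mul_div_assoc, div_self hπ0, mul_one]
  · -- pr C = 0
    have hA1 : pr μ A1 = 0 :=
      pr_zero' μ hμ0 A1 C (fun ω ⟨hx, hyi, _, hr⟩ => ⟨hx, hyi, fun j _ => hr j⟩) hC.symm
    have hA2 : pr μ A2 = 0 :=
      pr_zero' μ hμ0 A2 C (fun ω ⟨hx, hyi, _, hr⟩ => ⟨hx, hyi, hr⟩) hC.symm
    rw [hA1, hA2, zero_div]

/-- under self-censoring and positivity, the conditional moment
restriction `E{1(R = 1)/π_i(X, Y_i) − 1(R_{-i} = 1) | X, Y_{-i}} = 0` holds. -/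
theorem stmt11 {Ω 𝒳 𝒴 : Type*} [Fintype Ω] {p : ℕ}
    (μ : Ω → ℝ) (hμ0 : ∀ ω, 0 ≤ μ ω) (hμ1 : ∑ ω, μ ω = 1)
    (X : Ω → 𝒳) (Y : Ω → Fin p → 𝒴) (R : Ω → Fin p → Bool)
    (selfcensor : ∀ (i : Fin p) (a : Bool) (x : 𝒳) (yi : 𝒴) (yv : Fin p → 𝒴)
        (rv : Fin p → Bool),
      pr μ (fun ω => X ω = x ∧ Y ω i = yi ∧ ∀ j, j ≠ i → R ω j = rv j) > 0 →
      cpr μ (fun ω => R ω i = a ∧ ∀ j, j ≠ i → Y ω j = yv j)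
          (fun ω => X ω = x ∧ Y ω i = yi ∧ ∀ j, j ≠ i → R ω j = rv j)
        = cpr μ (fun ω => R ω i = a)
            (fun ω => X ω = x ∧ Y ω i = yi ∧ ∀ j, j ≠ i → R ω j = rv j)
          * cpr μ (fun ω => ∀ j, j ≠ i → Y ω j = yv j)
            (fun ω => X ω = x ∧ Y ω i = yi ∧ ∀ j, j ≠ i → R ω j = rv j))
    (hpos : ∀ (r' : Fin p → Bool) (x : 𝒳) (y : Fin p → 𝒴),
      pr μ (fun ω => X ω = x ∧ ∀ j, Y ω j = y j) > 0 →
      cpr μ (fun ω => ∀ j, R ω j = r' j) (fun ω => X ω = x ∧ ∀ j, Y ω j = y j) > 0)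
    (i : Fin p) (x : 𝒳) (yv : Fin p → 𝒴)
    (hB : pr μ (fun ω => X ω = x ∧ ∀ j, j ≠ i → Y ω j = yv j) > 0) :
    cexp μ
      (fun ω =>
        (if ∀ j, R ω j = true then 1 / piFn μ X Y R i (X ω) (Y ω i) else 0) -
          (if ∀ j, j ≠ i → R ω j = true then 1 else 0))
      (fun ω => X ω = x ∧ ∀ j, j ≠ i → Y ω j = yv j) = 0 := by
  unfold cexp
  rw [div_eq_zero_iff]
  left
  rw [← Finset.sum_fiberwise_of_maps_to (t := Finset.univ.image fun ω => Y ω i)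
    (g := fun ω => Y ω i)
    (fun ω _ => Finset.mem_image_of_mem _ (Finset.mem_univ ω))]
  refine Finset.sum_eq_zero fun yi _ => ?_
  rw [Finset.sum_filter]
  beta_reduce
  have step : ∀ ω : Ω,
      (if Y ω i = yi then
        (@ite ℝ (X ω = x ∧ ∀ j, j ≠ i → Y ω j = yv j) (Classical.propDecidable _)
          (μ ω * ((if ∀ j, R ω j = true then 1 / piFn μ X Y R i (X ω) (Y ω i) else 0) -
            (if ∀ j, j ≠ i → R ω j = true then 1 else 0))) 0) else 0)
      = (@ite ℝ (X ω = x ∧ Y ω i = yi ∧ (∀ j, j ≠ i → Y ω j = yv j) ∧ ∀ j, R ω j = true)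
          (Classical.propDecidable _) (μ ω) 0) * (1 / piFn μ X Y R i x yi)
        - (@ite ℝ (X ω = x ∧ Y ω i = yi ∧ (∀ j, j ≠ i → Y ω j = yv j) ∧
            ∀ j, j ≠ i → R ω j = true) (Classical.propDecidable _) (μ ω) 0) := by
    intro ω
    by_cases h1 : Y ω i = yi
    · by_cases h2 : X ω = x ∧ ∀ j, j ≠ i → Y ω j = yv j
      · have hpi : piFn μ X Y R i (X ω) (Y ω i) = piFn μ X Y R i x yi := by rw [h2.1, h1]
        rw [if_pos h1, if_pos h2, hpi]
        by_cases hr2 : ∀ j, j ≠ i → R ω j = true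
        · by_cases hr1 : ∀ j, R ω j = true
          · rw [if_pos hr1, if_pos hr2, if_pos ⟨h2.1, h1, h2.2, hr1⟩,
              if_pos ⟨h2.1, h1, h2.2, hr2⟩]
            ring
          · rw [if_neg hr1, if_pos hr2, if_neg (fun h => hr1 h.2.2.2),
              if_pos ⟨h2.1, h1, h2.2, hr2⟩]
            ring
        · have hr1 : ¬∀ j, R ω j = true := fun h => hr2 fun j _ => h j
          rw [if_neg hr1, if_neg hr2, if_neg (fun h => hr1 h.2.2.2),
            if_neg (fun h => hr2 h.2.2.2)]
          ring
      · rw [if_pos h1, if_neg h2, if_neg (fun h => h2 ⟨h.1, h.2.2.1⟩),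
          if_neg (fun h => h2 ⟨h.1, h.2.2.1⟩)]
        ring
    · rw [if_neg h1, if_neg (fun h => h1 h.2.1), if_neg (fun h => h1 h.2.1)]
      ring
  refine (Finset.sum_congr rfl fun ω _ => step ω).trans ?_
  rw [Finset.sum_sub_distrib, ← Finset.sum_mul, mul_one_div]
  have hk := key' μ hμ0 X Y R selfcensor hpos i x yi yv
  unfold pr at hk
  beta_reduce at hk
  rw [hk, sub_self]
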